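/- Let S be an anti-involutive semiring. Then S is exact; in particular, for all matrices A ∈ S^{m×n} and B ∈ S^{p×n}, if ker(row(A)) ⊆ ker(row(B)) then row(B) ⊆ row(A); moreover every element of row(B) can be written in the form (conj(Av))A for suitable v. -/
import Mathlib


open Matrix

def conjT {S : Type*} [Semiring S] (conj : S → S) {m n : ℕ}
    (A : Matrix (Fin m) (Fin n) S) : Matrix (Fin n) (Fin m) S :=
  Matrix.of fun i j => conj (A j i)

section aux

variable {S : Type*} [Semiring S]

lemma sle_trans {T : Type*} [AddSemigroup T] {a b c : T} (h1 : a + b = b) (h2 : b + c = c) :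
    a + c = c := by
  rw [← h2, ← add_assoc, h1]

lemma sle_sum {ι : Type*} (hid : ∀ a : S, a + a = a) (s : Finset ι) (f : ι → S) (c : S)
    (h : ∀ i ∈ s, f i + c = c) : (∑ i ∈ s, f i) + c = c := by
  classical
  induction s using Finset.induction_on with
  | empty => simp
  | @insert a s' hx ih =>
      rw [Finset.sum_insert hx, add_assoc,
        ih fun i hi => h i (Finset.mem_insert_of_mem hi),
        h a (Finset.mem_insert_self a s')]

lemma term_le_sum {ι : Type*} (hid : ∀ a : S, a + a = a) (s : Finset ι) (f : ι → S) (j : ι)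
    (hj : j ∈ s) : f j + (∑ i ∈ s, f i) = ∑ i ∈ s, f i := by
  classical
  rw [← Finset.add_sum_erase s f hj, ← add_assoc, hid]

/-- Matrix form of the cycling property: `M * A ≤ B → B̄ M ≤ Ā`. -/
lemma cyc_mat (conj : S → S) (hid : ∀ a : S, a + a = a)
    (hcyc : ∀ a b c : S, a * b + c = c → conj c * a + conj b = conj b)
    {a b c : ℕ} (M : Matrix (Fin a) (Fin b) S) (A : Matrix (Fin b) (Fin c) S)
    (B : Matrix (Fin a) (Fin c) S) (h : M * A + B = B) :
    conjT conj B * M + conjT conj A = conjT conj A := by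
  ext i j
  simp only [Matrix.add_apply, Matrix.mul_apply, conjT, Matrix.of_apply]
  apply sle_sum hid
  intro k _
  apply hcyc
  have h1 : M k j * A j i + (∑ l, M k l * A l i) = ∑ l, M k l * A l i :=
    term_le_sum hid Finset.univ (fun l => M k l * A l i) j (Finset.mem_univ j)
  have h2 : (∑ l, M k l * A l i) + B k i = B k i := by
    have := congrFun (congrFun h k) i
    simpa [Matrix.add_apply, Matrix.mul_apply] using this
  exact sle_trans h1 h2

end aux

/-- Every anti-involutive semiring is exact: if `ker(row(A)) ⊆ ker(row(B))` then
`row(B) ⊆ row(A)`; moreover every element `wB` of `row(B)` can be written in the form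
`conj(Av)ᵀ A` for a suitable column vector `v`. -/
theorem anti_involutive_exact {S : Type*} [Semiring S] (conj : S → S)
    (hid : ∀ a : S, a + a = a)
    (hinv : ∀ a : S, conj (conj a) = a)
    (hcyc : ∀ a b c : S, a * b + c = c → conj c * a + conj b = conj b)
    {m n p : ℕ} (A : Matrix (Fin m) (Fin n) S) (B : Matrix (Fin p) (Fin n) S)
    (hker : ∀ v v' : Matrix (Fin n) (Fin 1) S,
      (∀ u : Matrix (Fin 1) (Fin m) S, u * A * v = u * A * v') →
      (∀ w : Matrix (Fin 1) (Fin p) S, w * B * v = w * B * v')) :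
    ∀ w : Matrix (Fin 1) (Fin p) S,
      ∃ v : Matrix (Fin n) (Fin 1) S, w * B = conjT conj (A * v) * A := by
  intro w
  classical
  set x : Matrix (Fin 1) (Fin n) S := w * B with hx
  refine ⟨conjT conj x, ?_⟩
  set v : Matrix (Fin n) (Fin 1) S := conjT conj x with hv
  set c : Matrix (Fin m) (Fin 1) S := A * v with hc
  set y : Matrix (Fin 1) (Fin n) S := conjT conj c * A with hy
  -- basic facts
  have hreflM : ∀ {a b : ℕ} (X : Matrix (Fin a) (Fin b) S), X + X = X := by
    intro a b X; ext i j; exact hid _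
  have hinvM : ∀ {a b : ℕ} (X : Matrix (Fin a) (Fin b) S), conjT conj (conjT conj X) = X := by
    intro a b X; ext i j; simp [conjT, hinv]
  -- Step A : y ≤ x
  have hA : y + x = x := by
    have := cyc_mat conj hid hcyc A v c (hreflM c)
    rwa [hinvM] at this
  -- Step B
  have hB : conjT conj y * conjT conj c + conjT conj A = conjT conj A :=
    cyc_mat conj hid hcyc (conjT conj c) A y (hreflM y)
  -- Step C : A * conj(y)ᵀ ≤ c
  have hCc : A * conjT conj y + c = c := by
    have := cyc_mat conj hid hcyc (conjT conj y) (conjT conj c) (conjT conj A) hB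
    rwa [hinvM, hinvM] at this
  -- Step D : feed into hker
  have hAv : A * (v + conjT conj y) = A * v := by
    rw [Matrix.mul_add, ← hc, add_comm, hCc]
  have hkeru : ∀ u : Matrix (Fin 1) (Fin m) S,
      u * A * (v + conjT conj y) = u * A * v := by
    intro u
    rw [Matrix.mul_assoc, Matrix.mul_assoc, hAv]
  have hkerw := hker (v + conjT conj y) v hkeru
  -- matrix consequence : B * (v + conj(y)ᵀ) = B * v
  have hBv : B * (v + conjT conj y) = B * v := by
    ext i j
    have h := hkerw (Matrix.of fun _ k => if k = i then (1 : S) else 0)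
    have h0 := congrFun (congrFun h 0) j
    simpa [Matrix.mul_apply, Matrix.of_apply, ite_mul, Finset.sum_ite_eq,
      Fin.isValue] using h0
  set d : Matrix (Fin p) (Fin 1) S := B * v with hd
  have hE0 : B * conjT conj y + d = d := by
    have : B * v + B * conjT conj y = d := by rw [← Matrix.mul_add]; exact hBv
    rw [← this]
    rw [← add_assoc, add_comm (B * conjT conj y) (B * v), add_assoc, hreflM]
  -- Step E : conj(d)ᵀ * B ≤ y
  have hE : conjT conj d * B + y = y := by
    have := cyc_mat conj hid hcyc B (conjT conj y) d hE0
    rwa [hinvM] at this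
  -- Step F
  have hF : conjT conj x * w + conjT conj B = conjT conj B :=
    cyc_mat conj hid hcyc w B x (hreflM x)
  -- Step G : d ≤ conj(w)ᵀ
  have hG : d + conjT conj w = conjT conj w := by
    have := cyc_mat conj hid hcyc (conjT conj x) w (conjT conj B) hF
    rwa [hinvM, ← hv, ← hd] at this
  -- Step H : w ≤ conj(d)ᵀ  (conj is antitone)
  have hanti : ∀ a c : S, a + c = c → conj c + conj a = conj a := by
    intro a c h
    have := hcyc 1 a c (by rwa [one_mul])
    rwa [mul_one] at this
  have hH : w + conjT conj d = conjT conj d := by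
    ext i j
    have h := congrFun (congrFun hG j) i
    simp only [Matrix.add_apply, conjT, Matrix.of_apply] at h ⊢
    have := hanti (d j i) (conj (w i j)) h
    rwa [hinv] at this
  -- Step I : x ≤ y
  have hI : x + y = y := by
    have h1 : w * B + conjT conj d * B = conjT conj d * B := by
      rw [← Matrix.add_mul, hH]
    exact sle_trans (a := x) (b := conjT conj d * B) (c := y) h1 hE
  -- antisymmetry
  have hxy : x = y := by
    calc x = y + x := hA.symm
      _ = x + y := add_comm _ _
      _ = y := hI
  exact hxy
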